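/- Let X and Y be Banach spaces over 𝕂 (= ℝ or ℂ), let E be an invariant sequence space over X, and let f : X → Y be non-contractive. Then the set C(E, f, 0) = { (x_j)_{j=1}^∞ ∈ E : (f(x_j))_{j=1}^∞ ∉ c₀(Y) } is either empty or spaceable in E. -/

import Mathlib

open scoped Classical

/-- The zero-deleted sequence `x⁰`: if `x` has infinitely many nonzero coordinates, the
sequence of its nonzero coordinates in order; otherwise `0`. -/
noncomputable def zeroFree {X : Type*} [Zero X] (x : ℕ → X) : ℕ → X :=
  if {j | x j ≠ 0}.Infinite then fun k => x (Nat.nth (fun j => x j ≠ 0) k) else 0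

/-- An invariant sequence space over a Banach space `X` (Definition 1.1 of the paper):
an infinite-dimensional Banach space of `X`-valued sequences such that
(b1) for `x` with `x⁰ ≠ 0`, `x ∈ E ↔ x⁰ ∈ E` and `‖x‖ ≤ K‖x⁰‖`, and
(b2) `‖x j‖ ≤ ‖x‖` for every `x ∈ E` and every `j`.  Completeness and closedness are
expressed via the metric induced by the norm function. -/
structure InvariantSeqSpace (𝕂 : Type*) (X : Type*) [RCLike 𝕂]
    [NormedAddCommGroup X] [NormedSpace 𝕂 X] where
  carrier : Submodule 𝕂 (ℕ → X)
  norm : (ℕ → X) → ℝ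
  norm_nonneg : ∀ x ∈ carrier, 0 ≤ norm x
  norm_eq_zero_iff : ∀ x ∈ carrier, (norm x = 0 ↔ x = 0)
  norm_smul : ∀ (a : 𝕂), ∀ x ∈ carrier, norm (a • x) = ‖a‖ * norm x
  norm_add_le : ∀ x ∈ carrier, ∀ y ∈ carrier, norm (x + y) ≤ norm x + norm y
  complete : ∀ u : ℕ → ℕ → X, (∀ n, u n ∈ carrier) →
    (∀ ε : ℝ, 0 < ε → ∃ N, ∀ m ≥ N, ∀ n ≥ N, norm (u m - u n) < ε) →
    ∃ x ∈ carrier, ∀ ε : ℝ, 0 < ε → ∃ N, ∀ n ≥ N, norm (u n - x) < ε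
  infiniteDimensional : ¬ Module.Finite 𝕂 carrier
  K : ℝ
  K_pos : 0 < K
  mem_iff_zeroFree_mem : ∀ x : ℕ → X, zeroFree x ≠ 0 → (x ∈ carrier ↔ zeroFree x ∈ carrier)
  norm_le_K_mul : ∀ x : ℕ → X, zeroFree x ≠ 0 → x ∈ carrier → norm x ≤ K * norm (zeroFree x)
  coord_norm_le : ∀ x ∈ carrier, ∀ j : ℕ, ‖x j‖ ≤ norm x

/-- A strongly invariant sequence space: an invariant sequence space containing `c₀₀(X)`
and such that a sequence belongs to the space iff all of its subsequences do. -/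
structure StronglyInvariantSeqSpace (𝕂 : Type*) (X : Type*) [RCLike 𝕂]
    [NormedAddCommGroup X] [NormedSpace 𝕂 X] extends InvariantSeqSpace 𝕂 X where
  c00_subset : ∀ x : ℕ → X, {j | x j ≠ 0}.Finite → x ∈ carrier
  mem_iff_subseq : ∀ x : ℕ → X,
    x ∈ carrier ↔ ∀ n : ℕ → ℕ, StrictMono n → (fun k => x (n k)) ∈ carrier

/-- A subset `A` of an invariant sequence space `E` is spaceable if `A ∪ {0}` contains a
closed (w.r.t. the norm of `E`) infinite-dimensional linear subspace of `E`. -/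
def Spaceable {𝕂 X : Type*} [RCLike 𝕂] [NormedAddCommGroup X] [NormedSpace 𝕂 X]
    (E : InvariantSeqSpace 𝕂 X) (A : Set (ℕ → X)) : Prop :=
  ∃ V : Submodule 𝕂 (ℕ → X), V ≤ E.carrier ∧ ¬ Module.Finite 𝕂 V ∧
    (V : Set (ℕ → X)) ⊆ A ∪ {0} ∧
    ∀ u : ℕ → ℕ → X, (∀ n, u n ∈ V) → ∀ z ∈ E.carrier,
      (∀ ε : ℝ, 0 < ε → ∃ N, ∀ n ≥ N, E.norm (u n - z) < ε) → z ∈ V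

/-- `f : X → Y` is non-contractive: `f 0 = 0` and for every scalar `α ≠ 0` there is
`K(α) > 0` with `‖f(αx)‖ ≥ K(α)‖f(x)‖` for all `x`. -/
def NonContractive {𝕂 X Y : Type*} [RCLike 𝕂] [NormedAddCommGroup X] [NormedSpace 𝕂 X]
    [NormedAddCommGroup Y] [NormedSpace 𝕂 Y] (f : X → Y) : Prop :=
  f 0 = 0 ∧ ∀ a : 𝕂, a ≠ 0 → ∃ K : ℝ, 0 < K ∧ ∀ x : X, K * ‖f x‖ ≤ ‖f (a • x)‖

/-!
If some `x ∈ E` has `f(x_j) ↛ 0`, then `f` does not tend to `0` along the zero-free sequence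
`v = x⁰` either, and every coordinate of `v` is nonzero. Split `ℕ` into the infinitely many strips
`{⟨i, k⟩ : k ∈ ℕ}` of `Nat.pair` and let `y_i` carry `v` on the `i`-th strip and `0` elsewhere:
then `y_i⁰ = v`, so `y_i ∈ E` by (b1). The sequences of `E` which on each strip are a scalar
multiple `a_i • v` form a subspace containing the linearly independent `y_i`; it is closed because,
by (b2), convergence in `E` implies coordinatewise convergence and lines in `X` are closed. A
nonzero element has some `a_i ≠ 0`, and along its `i`-th strip `f` sees `a_i • v_k`, which does
not tend to `0` since `f` is non-contractive.
-/

open Filter Topology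

section ZeroFree

variable {X : Type*} [Zero X] {x : ℕ → X}

lemma zeroFree_of_infinite (hx : {j | x j ≠ 0}.Infinite) :
    zeroFree x = fun k => x (Nat.nth (fun j => x j ≠ 0) k) := by
  rw [zeroFree, if_pos hx]

lemma zeroFree_apply_ne_zero (hx : {j | x j ≠ 0}.Infinite) (k : ℕ) : zeroFree x k ≠ 0 := by
  rw [zeroFree_of_infinite hx]
  exact Nat.nth_mem_of_infinite hx k

lemma infinite_support_of_frequently {p : X → Prop} (hp : ¬ p 0)
    (h : ∃ᶠ j in atTop, p (x j)) : {j | x j ≠ 0}.Infinite :=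
  (Nat.frequently_atTop_iff_infinite.mp h).mono fun _ hj h0 => hp (h0 ▸ hj)

lemma frequently_zeroFree {p : X → Prop} (hp : ¬ p 0) (h : ∃ᶠ j in atTop, p (x j)) :
    ∃ᶠ k in atTop, p (zeroFree x k) := by
  have hx := infinite_support_of_frequently hp h
  rw [Nat.frequently_atTop_iff_infinite] at h ⊢
  rw [zeroFree_of_infinite hx]
  refine h.preimage fun j hj => ?_
  rw [Nat.range_nth_of_infinite hx]
  exact fun h0 => hp (h0 ▸ hj)

variable {Y : Type*} [TopologicalSpace Y] {f : X → Y}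

lemma infinite_support_of_not_tendsto (h : ¬ Tendsto (fun j => f (x j)) atTop (𝓝 (f 0))) :
    {j | x j ≠ 0}.Infinite := by
  obtain ⟨s, hs, hfreq⟩ := not_tendsto_iff_exists_frequently_notMem.mp h
  exact infinite_support_of_frequently (p := fun v => f v ∉ s) (not_not.mpr (mem_of_mem_nhds hs))
    hfreq

lemma not_tendsto_comp_zeroFree (h : ¬ Tendsto (fun j => f (x j)) atTop (𝓝 (f 0))) :
    ¬ Tendsto (fun k => f (zeroFree x k)) atTop (𝓝 (f 0)) := by
  obtain ⟨s, hs, hfreq⟩ := not_tendsto_iff_exists_frequently_notMem.mp h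
  exact not_tendsto_iff_exists_frequently_notMem.mpr
    ⟨s, hs, frequently_zeroFree (p := fun v => f v ∉ s) (not_not.mpr (mem_of_mem_nhds hs)) hfreq⟩

end ZeroFree

section Strip

variable {X : Type*} [Zero X]

noncomputable def strip (v : ℕ → X) (i : ℕ) : ℕ → X :=
  fun j => if (Nat.unpair j).1 = i then v (Nat.unpair j).2 else 0

lemma strip_pair (v : ℕ → X) (i i' k : ℕ) :
    strip v i (Nat.pair i' k) = if i' = i then v k else 0 := by
  simp [strip, Nat.unpair_pair]

lemma Nat.range_pair_left (i : ℕ) : Set.range (Nat.pair i) = {j | (Nat.unpair j).1 = i} := by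
  ext j
  constructor
  · rintro ⟨k, rfl⟩
    simp [Nat.unpair_pair]
  · intro h
    exact ⟨(Nat.unpair j).2, by rw [← h, Nat.pair_unpair]⟩

lemma Nat.strictMono_pair (i : ℕ) : StrictMono (Nat.pair i) := fun _ _ => Nat.pair_lt_pair_right i

lemma Nat.infinite_unpair_fst_eq (i : ℕ) : {j | (Nat.unpair j).1 = i}.Infinite :=
  Nat.range_pair_left i ▸ Set.infinite_range_of_injective (Nat.strictMono_pair i).injective

lemma Nat.nth_unpair_fst_eq (i : ℕ) : Nat.nth (fun j => (Nat.unpair j).1 = i) = Nat.pair i :=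
  (StrictMono.range_inj (Nat.nth_strictMono (Nat.infinite_unpair_fst_eq i)) (Nat.strictMono_pair i)).mp
    ((Nat.range_nth_of_infinite (Nat.infinite_unpair_fst_eq i)).trans (Nat.range_pair_left i).symm)

lemma zeroFree_strip {v : ℕ → X} (hv : ∀ k, v k ≠ 0) (i : ℕ) : zeroFree (strip v i) = v := by
  have hsupp : (fun j => strip v i j ≠ 0) = fun j => (Nat.unpair j).1 = i := by
    funext j
    by_cases h : (Nat.unpair j).1 = i <;> simp [strip, h, hv _]
  have hinf : {j | strip v i j ≠ 0}.Infinite := by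
    rw [hsupp]
    exact Nat.infinite_unpair_fst_eq i
  rw [zeroFree_of_infinite hinf, hsupp, Nat.nth_unpair_fst_eq]
  funext k
  simp [strip_pair]

end Strip

lemma linearIndependent_strip {𝕂 X : Type*} [DivisionRing 𝕂] [AddCommGroup X] [Module 𝕂 X]
    {v : ℕ → X} (hv : v ≠ 0) : LinearIndependent 𝕂 (strip v) := by
  obtain ⟨k, hk⟩ := Function.ne_iff.mp hv
  rw [linearIndependent_iff']
  intro s g hg i hi
  have hcoord := congrFun hg (Nat.pair i k)
  simp only [Finset.sum_apply, Pi.smul_apply, Pi.zero_apply, strip_pair, smul_ite,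
    smul_zero, Finset.sum_ite_eq, if_pos hi] at hcoord
  exact (smul_eq_zero.mp hcoord).resolve_right hk

namespace NonContractive

variable {𝕂 X Y : Type*} [RCLike 𝕂] [NormedAddCommGroup X] [NormedSpace 𝕂 X]
  [NormedAddCommGroup Y] [NormedSpace 𝕂 Y] {f : X → Y}

lemma tendsto_zero_of_tendsto_smul (hf : NonContractive (𝕂 := 𝕂) f) {a : 𝕂} (ha : a ≠ 0)
    {ι : Type*} {l : Filter ι} {v : ι → X} (h : Tendsto (fun k => f (a • v k)) l (𝓝 0)) :
    Tendsto (fun k => f (v k)) l (𝓝 0) := by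
  obtain ⟨K, hK, hKf⟩ := hf.2 a ha
  refine squeeze_zero_norm (fun k => ?_) (by simpa using h.norm.const_mul K⁻¹)
  rw [le_inv_mul_iff₀ hK]
  exact hKf (v k)

end NonContractive

lemma exists_tendsto_of_tendsto_smul_const {𝕜 E : Type*} [NontriviallyNormedField 𝕜]
    [CompleteSpace 𝕜] [AddCommGroup E] [TopologicalSpace E] [IsTopologicalAddGroup E]
    [Module 𝕜 E] [ContinuousSMul 𝕜 E] [T2Space E] {ι : Type*} {l : Filter ι} [l.NeBot]
    {c : ι → 𝕜} {v w : E} (hv : v ≠ 0) (h : Tendsto (fun n => c n • v) l (𝓝 w)) :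
    ∃ b, Tendsto c l (𝓝 b) := by
  have hemb := isClosedEmbedding_smul_left (𝕜 := 𝕜) hv
  obtain ⟨b, rfl⟩ : w ∈ Set.range (· • v) :=
    hemb.isClosed_range.mem_of_tendsto h (Eventually.of_forall fun n => ⟨c n, rfl⟩)
  exact ⟨b, hemb.tendsto_nhds_iff.mpr h⟩

namespace InvariantSeqSpace

variable {𝕂 X : Type*} [RCLike 𝕂] [NormedAddCommGroup X] [NormedSpace 𝕂 X]
  (E : InvariantSeqSpace 𝕂 X)

lemma tendsto_apply_of_tendsto_norm {u : ℕ → ℕ → X} {z : ℕ → X} (hu : ∀ n, u n ∈ E.carrier)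
    (hz : z ∈ E.carrier) (h : ∀ ε : ℝ, 0 < ε → ∃ N, ∀ n ≥ N, E.norm (u n - z) < ε) (j : ℕ) :
    Tendsto (fun n => u n j) atTop (𝓝 (z j)) := by
  rw [Metric.tendsto_atTop]
  intro ε hε
  obtain ⟨N, hN⟩ := h ε hε
  refine ⟨N, fun n hn => ?_⟩
  rw [dist_eq_norm]
  exact (E.coord_norm_le _ (sub_mem (hu n) hz) j).trans_lt (hN n hn)

lemma strip_mem {v : ℕ → X} (hv : ∀ k, v k ≠ 0) (hvE : v ∈ E.carrier) (i : ℕ) :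
    strip v i ∈ E.carrier := by
  have hv0 : zeroFree (strip v i) ≠ 0 := by
    rw [zeroFree_strip hv]
    exact fun h => hv 0 (congrFun h 0)
  rw [E.mem_iff_zeroFree_mem _ hv0, zeroFree_strip hv]
  exact hvE

def stripSubmodule (v : ℕ → X) : Submodule 𝕂 (ℕ → X) where
  carrier := {z | z ∈ E.carrier ∧ ∃ a : ℕ → 𝕂, ∀ i k, z (Nat.pair i k) = a i • v k}
  add_mem' := by
    rintro z w ⟨hz, a, ha⟩ ⟨hw, b, hb⟩
    exact ⟨add_mem hz hw, a + b, fun i k => by simp [ha, hb, add_smul]⟩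
  zero_mem' := ⟨zero_mem _, 0, fun i k => by simp⟩
  smul_mem' := by
    rintro c z ⟨hz, a, ha⟩
    exact ⟨Submodule.smul_mem _ c hz, c • a, fun i k => by simp [ha, smul_smul]⟩

variable {E} {v : ℕ → X}

lemma strip_mem_stripSubmodule (hv : ∀ k, v k ≠ 0) (hvE : v ∈ E.carrier) (i : ℕ) :
    strip v i ∈ E.stripSubmodule v := by
  refine ⟨E.strip_mem hv hvE i, fun i' => if i' = i then 1 else 0, fun i' k => ?_⟩
  rw [strip_pair]
  by_cases h : i' = i <;> simp [h]

lemma not_finite_stripSubmodule (hv : ∀ k, v k ≠ 0) (hvE : v ∈ E.carrier) :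
    ¬ Module.Finite 𝕂 (E.stripSubmodule v) := fun _ =>
  Module.Finite.not_linearIndependent_of_infinite (R := 𝕂)
    (fun i => (⟨strip v i, strip_mem_stripSubmodule hv hvE i⟩ : E.stripSubmodule v))
    (LinearIndependent.of_comp (E.stripSubmodule v).subtype
      (linearIndependent_strip fun h => hv 0 (congrFun h 0)))

lemma mem_stripSubmodule_of_tendsto (hv : v ≠ 0) {u : ℕ → ℕ → X}
    (hu : ∀ n, u n ∈ E.stripSubmodule v) {z : ℕ → X} (hz : z ∈ E.carrier)
    (h : ∀ ε : ℝ, 0 < ε → ∃ N, ∀ n ≥ N, E.norm (u n - z) < ε) : z ∈ E.stripSubmodule v := by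
  obtain ⟨k₀, hk₀⟩ := Function.ne_iff.mp hv
  choose a ha using fun n => (hu n).2
  have hcoord := E.tendsto_apply_of_tendsto_norm (fun n => (hu n).1) hz h
  have hlim : ∀ i, ∃ b, Tendsto (fun n => a n i) atTop (𝓝 b) := fun i =>
    exists_tendsto_of_tendsto_smul_const hk₀ (by simpa only [ha] using hcoord (Nat.pair i k₀))
  choose b hb using hlim
  refine ⟨hz, b, fun i k => tendsto_nhds_unique ?_ ((hb i).smul_const (v k))⟩
  simpa only [ha] using hcoord (Nat.pair i k)

lemma not_tendsto_of_mem_stripSubmodule {Y : Type*} [NormedAddCommGroup Y] [NormedSpace 𝕂 Y]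
    {f : X → Y} (hf : NonContractive (𝕂 := 𝕂) f)
    (hfv : ¬ Tendsto (fun k => f (v k)) atTop (𝓝 0)) {z : ℕ → X}
    (hz : z ∈ E.stripSubmodule v) (hz0 : z ≠ 0) :
    ¬ Tendsto (fun j => f (z j)) atTop (𝓝 0) := by
  obtain ⟨-, a, ha⟩ := hz
  obtain ⟨j, hj⟩ := Function.ne_iff.mp hz0
  have hai : a (Nat.unpair j).1 ≠ 0 := by
    intro h0
    apply hj
    rw [← Nat.pair_unpair j, ha, h0, zero_smul, Pi.zero_apply]
  intro hfz
  have hpair : Tendsto (Nat.pair (Nat.unpair j).1) atTop atTop :=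
    (Nat.strictMono_pair _).tendsto_atTop
  refine hfv (hf.tendsto_zero_of_tendsto_smul hai ?_)
  simpa only [Function.comp_def, ha] using hfz.comp hpair

theorem spaceable_stripSubmodule {Y : Type*} [NormedAddCommGroup Y] [NormedSpace 𝕂 Y]
    {f : X → Y} (hf : NonContractive (𝕂 := 𝕂) f) (hv : ∀ k, v k ≠ 0) (hvE : v ∈ E.carrier)
    (hfv : ¬ Tendsto (fun k => f (v k)) atTop (𝓝 0)) :
    Spaceable E {x : ℕ → X | x ∈ E.carrier ∧ ¬ Tendsto (fun j => f (x j)) atTop (𝓝 0)} :=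
  ⟨E.stripSubmodule v, fun _ hz => hz.1, not_finite_stripSubmodule hv hvE,
    fun _ hz => or_iff_not_imp_right.mpr fun hz0 =>
      ⟨hz.1, not_tendsto_of_mem_stripSubmodule hf hfv hz hz0⟩,
    fun _ hu _ hz h => mem_stripSubmodule_of_tendsto (fun h0 => hv 0 (congrFun h0 0)) hu hz h⟩

end InvariantSeqSpace

open Filter in
theorem spaceability_of_C_zero_general {𝕂 X Y : Type*} [RCLike 𝕂]
    [NormedAddCommGroup X] [NormedSpace 𝕂 X]
    [NormedAddCommGroup Y] [NormedSpace 𝕂 Y]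
    (E : InvariantSeqSpace 𝕂 X) (f : X → Y) (hf : NonContractive (𝕂 := 𝕂) f) :
    {x : ℕ → X | x ∈ E.carrier ∧ ¬ Tendsto (fun j => f (x j)) atTop (nhds 0)} = ∅ ∨
      Spaceable E
        {x : ℕ → X | x ∈ E.carrier ∧ ¬ Tendsto (fun j => f (x j)) atTop (nhds 0)} := by
  refine (Set.eq_empty_or_nonempty _).imp id fun ⟨x, hxE, hfx⟩ => ?_
  rw [← hf.1] at hfx
  have hsupp := infinite_support_of_not_tendsto hfx
  have hx0 : zeroFree x ≠ 0 := fun h => zeroFree_apply_ne_zero hsupp 0 (congrFun h 0)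
  refine E.spaceable_stripSubmodule hf (zeroFree_apply_ne_zero hsupp)
    ((E.mem_iff_zeroFree_mem x hx0).mp hxE) ?_
  rw [← hf.1]
  exact not_tendsto_comp_zeroFree hfx

open Filter in
/-- **Theorem 1.4(a), second part (Botelho–Fávaro).**  If `f` is non-contractive, then
`C(E, f, 0) = {(x_j) ∈ E : (f(x_j)) ∉ c₀(Y)}` is either empty or spaceable in `E`. -/
theorem spaceability_of_C_zero {𝕂 X Y : Type*} [RCLike 𝕂]
    [NormedAddCommGroup X] [NormedSpace 𝕂 X] [CompleteSpace X]
    [NormedAddCommGroup Y] [NormedSpace 𝕂 Y] [CompleteSpace Y]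
    (E : InvariantSeqSpace 𝕂 X) (f : X → Y) (hf : NonContractive (𝕂 := 𝕂) f) :
    {x : ℕ → X | x ∈ E.carrier ∧ ¬ Tendsto (fun j => f (x j)) atTop (nhds 0)} = ∅ ∨
      Spaceable E
        {x : ℕ → X | x ∈ E.carrier ∧ ¬ Tendsto (fun j => f (x j)) atTop (nhds 0)} :=
  spaceability_of_C_zero_general E f hf
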